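/- arXiv:1509.01753 — 2 statements merged into one kernel-verified Lean document; each statement's English description precedes it below -/
import Mathlib

section
/- Let 1<q<2<p, M > 0 > A, and B real with -K_1(M,A) < B < 0 where K_1(M,A) = C_{pq} M^{(p-q)/(p-2)} (-A)^{-(2-q)/(p-2)}. Then φ(t) = M t^{2-q} + A t^{p-q} + B has exactly two positive zeros c_1 < c_2, and they satisfy c_1 < ((2-q)M/((p-q)(-A)))^{1/(p-2)} < c_2. -/
/-!
Since `φ'(t) = t^(1-q) ((2-q)M + (p-q)A t^(p-2))` has the sign of `t₀ - t`, the function `φ`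
increases from `φ(0) = B < 0` up to its maximum at `t₀` and then decreases, passing through the
value `B` again at `b = (M/(-A))^(1/(p-2)) > t₀`. The maximum is
`φ(t₀) = (p-2)/(p-q) · M t₀^(2-q) + B`, and `K₁(M,A)` equals this leading term times
`q/2 · (p/2)^((2-q)/(p-2)) ≤ 1`; hence `φ(t₀) > 0`, and the intermediate value theorem on
`[0, t₀]` and on `[t₀, b]`, together with strict monotonicity, yields exactly two zeros.
-/

open Real Set

theorem exists_two_zeros_of_strictMonoOn_of_strictAntiOn {f : ℝ → ℝ} {a t₀ b : ℝ}
    (hat : a ≤ t₀) (htb : t₀ ≤ b) (hf : ContinuousOn f (Icc a b))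
    (hmono : StrictMonoOn f (Icc a t₀)) (hanti : StrictAntiOn f (Ici t₀))
    (ha : f a < 0) (hb : f b < 0) (ht₀ : 0 < f t₀) :
    ∃ c₁ c₂, a < c₁ ∧ c₁ < t₀ ∧ t₀ < c₂ ∧ f c₁ = 0 ∧ f c₂ = 0 ∧
      ∀ t, a ≤ t → f t = 0 → t = c₁ ∨ t = c₂ := by
  obtain ⟨c₁, ⟨hac₁, hc₁t₀⟩, hc₁⟩ := intermediate_value_Ioo hat
    (hf.mono (Icc_subset_Icc_right htb)) (mem_Ioo.2 ⟨ha, ht₀⟩)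
  obtain ⟨c₂, ⟨ht₀c₂, -⟩, hc₂⟩ := intermediate_value_Ioo' htb
    (hf.mono (Icc_subset_Icc_left hat)) (mem_Ioo.2 ⟨hb, ht₀⟩)
  refine ⟨c₁, c₂, hac₁, hc₁t₀, ht₀c₂, hc₁, hc₂, fun t hat' ht => ?_⟩
  rcases lt_trichotomy t t₀ with h | rfl | h
  · exact .inl (hmono.injOn ⟨hat', h.le⟩ ⟨hac₁.le, hc₁t₀.le⟩ (ht.trans hc₁.symm))
  · exact absurd ht ht₀.ne'
  · exact .inr (hanti.injOn h.le ht₀c₂.le (ht.trans hc₂.symm))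

lemma half_mul_half_rpow_le_one {p q : ℝ} (hq₀ : 0 < q) (hq : q < 2) (hp : 2 < p) :
    q / 2 * (p / 2) ^ ((2 - q) / (p - 2)) ≤ 1 := by
  have hα : 0 ≤ (2 - q) / (p - 2) := div_nonneg (by linarith) (by linarith)
  have hp_le : (p / 2) ^ ((2 - q) / (p - 2)) ≤ exp ((2 - q) / 2) := calc
    _ ≤ exp ((p - 2) / 2) ^ ((2 - q) / (p - 2)) :=
      rpow_le_rpow (by linarith) (by linarith [add_one_le_exp ((p - 2) / 2)]) hα
    _ = exp ((2 - q) / 2) := by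
      rw [← exp_mul]
      congr 1
      field_simp [(by linarith : p - 2 ≠ 0)]
  have hexp_le : exp ((2 - q) / 2) ≤ 2 / q := by
    have := exp_bound_div_one_sub_of_interval (x := (2 - q) / 2) (by linarith) (by linarith)
    rwa [show 1 - (2 - q) / 2 = q / 2 by ring, one_div_div] at this
  calc q / 2 * (p / 2) ^ ((2 - q) / (p - 2)) ≤ q / 2 * (2 / q) := by
        gcongr
        exact hp_le.trans hexp_le
    _ = 1 := by field_simp [hq₀.ne']

noncomputable def phi (p q M A B t : ℝ) : ℝ := M * t ^ (2 - q) + A * t ^ (p - q) + B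

noncomputable def K₁ (p q M A : ℝ) : ℝ :=
  (q * (p - 2) / (2 * (p - q))) * (p * (2 - q) / (2 * (p - q))) ^ ((2 - q) / (p - 2)) *
    M ^ ((p - q) / (p - 2)) / (-A) ^ ((2 - q) / (p - 2))

section phi

variable {p q M A B : ℝ}

lemma continuous_phi (hq : q < 2) (hqp : q < p) : Continuous (phi p q M A B) := by
  have h₁ := continuous_rpow_const (q := 2 - q) (by linarith)
  have h₂ := continuous_rpow_const (q := p - q) (by linarith)
  unfold phi
  fun_prop

lemma phi_zero (hq : q < 2) (hqp : q < p) : phi p q M A B 0 = B := by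
  simp [phi, zero_rpow (sub_pos.2 hq).ne', zero_rpow (sub_pos.2 hqp).ne']

lemma phi_eq_of_pos {t : ℝ} (ht : 0 < t) :
    phi p q M A B t = t ^ (2 - q) * (M + A * t ^ (p - 2)) + B := by
  rw [phi, show p - q = (2 - q) + (p - 2) by ring, rpow_add ht]
  ring

lemma hasDerivAt_phi {x : ℝ} (hx : 0 < x) :
    HasDerivAt (phi p q M A B) (x ^ (1 - q) * ((2 - q) * M + (p - q) * A * x ^ (p - 2))) x := by
  have h₁ := hasDerivAt_rpow_const (p := 2 - q) (Or.inl hx.ne')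
  have h₂ := hasDerivAt_rpow_const (p := p - q) (Or.inl hx.ne')
  refine (((h₁.const_mul M).add (h₂.const_mul A)).add_const B).congr_deriv ?_
  rw [show p - q - 1 = (1 - q) + (p - 2) by ring, rpow_add hx, show 2 - q - 1 = 1 - q by ring]
  ring

variable {t₀ : ℝ} (hcrit : (2 - q) * M + (p - q) * A * t₀ ^ (p - 2) = 0)
include hcrit

lemma strictMonoOn_phi (hq : q < 2) (hp : 2 < p) (hA : A < 0) :
    StrictMonoOn (phi p q M A B) (Icc 0 t₀) := by
  refine strictMonoOn_of_deriv_pos (convex_Icc 0 t₀)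
    (continuous_phi hq (by linarith)).continuousOn fun x hx => ?_
  rw [interior_Icc] at hx
  rw [(hasDerivAt_phi hx.1).deriv]
  have hlt : x ^ (p - 2) < t₀ ^ (p - 2) := rpow_lt_rpow hx.1.le hx.2 (by linarith)
  have hneg : (p - q) * A < 0 := mul_neg_of_pos_of_neg (by linarith) hA
  exact mul_pos (rpow_pos_of_pos hx.1 _) (by nlinarith)

lemma strictAntiOn_phi (hq : q < 2) (hp : 2 < p) (hA : A < 0) (ht₀ : 0 ≤ t₀) :
    StrictAntiOn (phi p q M A B) (Ici t₀) := by
  refine strictAntiOn_of_deriv_neg (convex_Ici t₀)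
    (continuous_phi hq (by linarith)).continuousOn fun x hx => ?_
  rw [interior_Ici] at hx
  have hx₀ : 0 < x := ht₀.trans_lt hx
  rw [(hasDerivAt_phi hx₀).deriv]
  have hlt : t₀ ^ (p - 2) < x ^ (p - 2) := rpow_lt_rpow ht₀ hx (by linarith)
  have hneg : (p - q) * A < 0 := mul_neg_of_pos_of_neg (by linarith) hA
  exact mul_neg_of_pos_of_neg (rpow_pos_of_pos hx₀ _) (by nlinarith)

lemma phi_crit (hqp : q < p) (ht₀ : 0 < t₀) :
    phi p q M A B t₀ = (p - 2) / (p - q) * M * t₀ ^ (2 - q) + B := by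
  have hAt₀ : A * t₀ ^ (p - 2) = -((2 - q) * M) / (p - q) := by
    field_simp [(sub_pos.2 hqp).ne']
    linarith
  rw [phi_eq_of_pos ht₀, hAt₀]
  field_simp [(sub_pos.2 hqp).ne']
  ring

end phi

lemma K₁_le {p q M A : ℝ} (hq₀ : 0 < q) (hq : q < 2) (hp : 2 < p) (hM : 0 < M) (hA : A < 0) :
    K₁ p q M A ≤
      (p - 2) / (p - q) * M * (((2 - q) * M / ((p - q) * (-A))) ^ (1 / (p - 2))) ^ (2 - q) := by
  set α := (2 - q) / (p - 2) with hα
  have h2q : 0 < 2 - q := by linarith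
  have hpq : 0 < p - q := by linarith
  have hnA : 0 < -A := by linarith
  have ht₀_pow : (((2 - q) * M / ((p - q) * (-A))) ^ (1 / (p - 2))) ^ (2 - q)
      = (2 - q) ^ α * M ^ α / ((p - q) ^ α * (-A) ^ α) := by
    rw [← rpow_mul (by positivity), one_div_mul_eq_div, div_rpow (by positivity) (by positivity),
      mul_rpow h2q.le hM.le, mul_rpow hpq.le hnA.le]
  have hK₁ : K₁ p q M A = (q / 2 * (p / 2) ^ α) *
      ((p - 2) / (p - q) * M * ((2 - q) ^ α * M ^ α / ((p - q) ^ α * (-A) ^ α))) := by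
    have hM_pow : M ^ ((p - q) / (p - 2)) = M * M ^ α := by
      rw [show (p - q) / (p - 2) = 1 + α by rw [hα]; field_simp [(by linarith : p - 2 ≠ 0)]; ring,
        rpow_add hM, rpow_one]
    rw [K₁, ← hα, div_rpow (by positivity) (by positivity), mul_rpow (by linarith) h2q.le,
      mul_rpow zero_le_two hpq.le, div_rpow (by linarith) zero_le_two, hM_pow]
    have : (2 : ℝ) ^ α ≠ 0 := (rpow_pos_of_pos two_pos α).ne'
    have : (p - q) ^ α ≠ 0 := (rpow_pos_of_pos hpq α).ne'
    have : (-A) ^ α ≠ 0 := (rpow_pos_of_pos hnA α).ne'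
    field_simp
  rw [ht₀_pow, hK₁]
  refine mul_le_of_le_one_left ?_ (half_mul_half_rpow_le_one hq₀ hq hp)
  have : 0 < (p - 2) / (p - q) := div_pos (by linarith) hpq
  positivity

/-- For `1 < q < 2 < p`, `M > 0 > A`, and `-K₁(M,A) < B < 0`, the function
`φ(t) = M t^(2-q) + A t^(p-q) + B` has exactly two positive zeros `c₁ < c₂`, and
`c₁ < ((2-q)M/((p-q)(-A)))^(1/(p-2)) < c₂`. -/
theorem stmt_4 (p q M A B : ℝ) (hq1 : 1 < q) (hq2 : q < 2) (hp : 2 < p)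
    (hM : 0 < M) (hA : A < 0)
    (hB1 : -((q * (p - 2) / (2 * (p - q))) * (p * (2 - q) / (2 * (p - q))) ^ ((2 - q) / (p - 2)) *
        M ^ ((p - q) / (p - 2)) / (-A) ^ ((2 - q) / (p - 2))) < B)
    (hB2 : B < 0) :
    ∃ c₁ c₂ : ℝ, 0 < c₁ ∧ c₁ < c₂ ∧
      M * c₁ ^ (2 - q) + A * c₁ ^ (p - q) + B = 0 ∧
      M * c₂ ^ (2 - q) + A * c₂ ^ (p - q) + B = 0 ∧
      (∀ t : ℝ, 0 < t → M * t ^ (2 - q) + A * t ^ (p - q) + B = 0 → t = c₁ ∨ t = c₂) ∧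
      c₁ < ((2 - q) * M / ((p - q) * (-A))) ^ (1 / (p - 2)) ∧
      ((2 - q) * M / ((p - q) * (-A))) ^ (1 / (p - 2)) < c₂ := by
  have hpq : 0 < p - q := by linarith
  have hnA : 0 < -A := by linarith
  have hpow (y : ℝ) (hy : 0 ≤ y) : (y ^ (1 / (p - 2))) ^ (p - 2) = y := by
    rw [one_div, rpow_inv_rpow hy (by linarith)]
  set X := (2 - q) * M / ((p - q) * (-A)) with hX
  set t₀ := X ^ (1 / (p - 2))
  set b := (M / (-A)) ^ (1 / (p - 2))
  have hX₀ : 0 < X := div_pos (mul_pos (by linarith) hM) (mul_pos hpq hnA)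
  have ht₀ : 0 < t₀ := rpow_pos_of_pos hX₀ _
  have hcrit : (2 - q) * M + (p - q) * A * t₀ ^ (p - 2) = 0 := by
    rw [hpow X hX₀.le, hX]
    field_simp [hA.ne]
    ring
  have ht₀b : t₀ < b := by
    refine rpow_lt_rpow hX₀.le ?_ (by apply div_pos one_pos; linarith)
    rw [hX, div_lt_div_iff₀ (mul_pos hpq hnA) hnA]
    nlinarith [mul_pos hM hnA]
  have hφb : phi p q M A B b = B := by
    rw [phi_eq_of_pos (ht₀.trans ht₀b), hpow _ (div_pos hM hnA).le]
    field_simp [hA.ne]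
    ring
  have hφt₀ : 0 < phi p q M A B t₀ := by
    have : -K₁ p q M A < B := hB1
    rw [phi_crit hcrit (by linarith) ht₀]
    linarith [K₁_le (by linarith) hq2 hp hM hA]
  obtain ⟨c₁, c₂, hc₁, hc₁t₀, ht₀c₂, h₁, h₂, huniq⟩ :=
    exists_two_zeros_of_strictMonoOn_of_strictAntiOn ht₀.le ht₀b.le
      (continuous_phi hq2 (by linarith)).continuousOn (strictMonoOn_phi hcrit hq2 hp hA)
      (strictAntiOn_phi hcrit hq2 hp hA ht₀.le) (by rwa [phi_zero hq2 (by linarith)])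
      (by rwa [hφb]) hφt₀
  exact ⟨c₁, c₂, hc₁, hc₁t₀.trans ht₀c₂, h₁, h₂, fun t ht => huniq t ht.le, hc₁t₀, ht₀c₂⟩
end

section
/- Let 1<q<2<p and M > 0 > A, with c_1, c_2 the two positive zeros of φ(t) = M t^{2-q} + A t^{p-q} + B (c_1 < c_2), where -K_1(M,A) < B < 0. Then the quantity Φ_t(c_j) := M + (p-1)c_j^{p-2}A + (q-1)c_j^{q-2}B satisfies c_j^{2-q} Φ_t(c_j) = (2-q)c_j^{2-q}M + (p-q)c_j^{p-q}A, and consequently Φ_t(c_1) > 0 while Φ_t(c_2) < 0. -/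
/-!
At a positive zero `c` of `φ` one has `c^(q-2) B = -(M + A c^(p-2))`, and substituting this into
`Φ_t(c)` gives `Φ_t(c) = (2-q) M + (p-q) A c^(p-2)`, which is `c^(q-1) g'(c)` for
`g(t) = M t^(2-q) + A t^(p-q)`. Since `g(c₁) = g(c₂)`, Rolle's theorem gives a critical point
`ξ ∈ (c₁, c₂)`, and `t ↦ (2-q) M + (p-q) A t^(p-2)` is strictly decreasing because `A < 0 < p-2`.
So it is positive at `c₁` and negative at `c₂`.
-/

open Real Set

section
variable {p q M A B c : ℝ}

lemma Phi_eq_of_phi_eq_zero (hc : 0 < c) (hz : M * c ^ (2 - q) + A * c ^ (p - q) + B = 0) :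
    M + (p - 1) * c ^ (p - 2) * A + (q - 1) * c ^ (q - 2) * B =
      (2 - q) * M + (p - q) * A * c ^ (p - 2) := by
  have hinv : c ^ (q - 2) * c ^ (2 - q) = 1 := by
    rw [← rpow_add hc]; norm_num
  have hshift : c ^ (q - 2) * c ^ (p - q) = c ^ (p - 2) := by
    rw [← rpow_add hc]; ring_nf
  have hB : c ^ (q - 2) * B = -(M + A * c ^ (p - 2)) := by
    rw [show B = -(M * c ^ (2 - q) + A * c ^ (p - q)) by linarith, ← hshift]
    linear_combination (-M) * hinv
  linear_combination (q - 1) * hB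

lemma rpow_two_sub_mul_Phi_eq_of_phi_eq_zero (hc : 0 < c)
    (hz : M * c ^ (2 - q) + A * c ^ (p - q) + B = 0) :
    c ^ (2 - q) * (M + (p - 1) * c ^ (p - 2) * A + (q - 1) * c ^ (q - 2) * B) =
      (2 - q) * c ^ (2 - q) * M + (p - q) * c ^ (p - q) * A := by
  have hshift : c ^ (2 - q) * c ^ (p - 2) = c ^ (p - q) := by
    rw [← rpow_add hc]; ring_nf
  rw [Phi_eq_of_phi_eq_zero hc hz, ← hshift]
  ring

end

lemma strictAntiOn_add_mul_rpow {a b r : ℝ} (ha : a < 0) (hr : 0 < r) :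
    StrictAntiOn (fun t : ℝ => b + a * t ^ r) (Ici 0) := fun s hs t _ hst => by
  simpa using mul_lt_mul_of_neg_left (rpow_lt_rpow hs hst hr) ha

lemma exists_mem_Ioo_two_sub_mul_add_mul_rpow_eq_zero {p q M A c₁ c₂ : ℝ}
    (hc₁ : 0 < c₁) (hc₁₂ : c₁ < c₂)
    (heq : M * c₁ ^ (2 - q) + A * c₁ ^ (p - q) = M * c₂ ^ (2 - q) + A * c₂ ^ (p - q)) :
    ∃ ξ ∈ Ioo c₁ c₂, (2 - q) * M + (p - q) * A * ξ ^ (p - 2) = 0 := by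
  have hderiv : ∀ t ∈ Ioo c₁ c₂, HasDerivAt (fun t => M * t ^ (2 - q) + A * t ^ (p - q))
      (M * ((2 - q) * t ^ (2 - q - 1)) + A * ((p - q) * t ^ (p - q - 1))) t := fun t ht =>
    have ht0 : t ≠ 0 := (hc₁.trans ht.1).ne'
    ((hasDerivAt_rpow_const (Or.inl ht0)).const_mul M).add
      ((hasDerivAt_rpow_const (Or.inl ht0)).const_mul A)
  have hcont : ContinuousOn (fun t => M * t ^ (2 - q) + A * t ^ (p - q)) (Icc c₁ c₂) := by
    have hne : ∀ t ∈ Icc c₁ c₂, t ≠ 0 := fun t ht => (hc₁.trans_le ht.1).ne'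
    exact (continuousOn_const.mul (continuousOn_id.rpow_const fun t ht => .inl (hne t ht))).add
      (continuousOn_const.mul (continuousOn_id.rpow_const fun t ht => .inl (hne t ht)))
  obtain ⟨ξ, hξI, hcrit⟩ := exists_hasDerivAt_eq_zero hc₁₂ hcont heq hderiv
  have hξ : 0 < ξ := hc₁.trans hξI.1
  have hfactor : M * ((2 - q) * ξ ^ (2 - q - 1)) + A * ((p - q) * ξ ^ (p - q - 1)) =
      ξ ^ (1 - q) * ((2 - q) * M + (p - q) * A * ξ ^ (p - 2)) := by
    have h₁ : ξ ^ (2 - q - 1) = ξ ^ (1 - q) := by ring_nf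
    have h₂ : ξ ^ (p - q - 1) = ξ ^ (1 - q) * ξ ^ (p - 2) := by
      rw [← rpow_add hξ]; ring_nf
    rw [h₁, h₂]; ring
  refine ⟨ξ, hξI, ?_⟩
  rw [hfactor] at hcrit
  exact (mul_eq_zero.mp hcrit).resolve_left (rpow_pos_of_pos hξ _).ne'

theorem stmt_15_general (p q M A B c₁ c₂ : ℝ) (hq2 : q < 2) (hp : 2 < p)
    (hA : A < 0)
    (hc1 : 0 < c₁) (hc12 : c₁ < c₂)
    (hz1 : M * c₁ ^ (2 - q) + A * c₁ ^ (p - q) + B = 0)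
    (hz2 : M * c₂ ^ (2 - q) + A * c₂ ^ (p - q) + B = 0) :
    (∀ c : ℝ, c = c₁ ∨ c = c₂ →
        c ^ (2 - q) * (M + (p - 1) * c ^ (p - 2) * A + (q - 1) * c ^ (q - 2) * B) =
          (2 - q) * c ^ (2 - q) * M + (p - q) * c ^ (p - q) * A) ∧
      0 < M + (p - 1) * c₁ ^ (p - 2) * A + (q - 1) * c₁ ^ (q - 2) * B ∧
      M + (p - 1) * c₂ ^ (p - 2) * A + (q - 1) * c₂ ^ (q - 2) * B < 0 := by
  have hc₂ : 0 < c₂ := hc1.trans hc12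
  have hg : M * c₁ ^ (2 - q) + A * c₁ ^ (p - q) = M * c₂ ^ (2 - q) + A * c₂ ^ (p - q) := by
    linarith
  obtain ⟨ξ, hξ, hcrit⟩ := exists_mem_Ioo_two_sub_mul_add_mul_rpow_eq_zero hc1 hc12 hg
  have hanti := strictAntiOn_add_mul_rpow (b := (2 - q) * M)
    (mul_neg_of_pos_of_neg (by linarith : 0 < p - q) hA) (by linarith : 0 < p - 2)
  have hξ₀ : ξ ∈ Ici (0 : ℝ) := (hc1.trans hξ.1).le
  refine ⟨?_, ?_, ?_⟩
  · rintro c (rfl | rfl)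
    · exact rpow_two_sub_mul_Phi_eq_of_phi_eq_zero hc1 hz1
    · exact rpow_two_sub_mul_Phi_eq_of_phi_eq_zero hc₂ hz2
  · rw [Phi_eq_of_phi_eq_zero hc1 hz1, ← hcrit]
    exact hanti hc1.le hξ₀ hξ.1
  · rw [Phi_eq_of_phi_eq_zero hc₂ hz2, ← hcrit]
    exact hanti hξ₀ hc₂.le hξ.2

/-- Let `c₁ < c₂` be the two positive zeros of `φ(t) = M t^(2-q) + A t^(p-q) + B`
(`M > 0 > A`, `-K₁(M,A) < B < 0`).  Then `Φ_t(c) := M + (p-1)c^(p-2)A + (q-1)c^(q-2)B`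
satisfies `c^(2-q) Φ_t(c) = (2-q)c^(2-q)M + (p-q)c^(p-q)A` for `c = c₁, c₂`, and
consequently `Φ_t(c₁) > 0` while `Φ_t(c₂) < 0`. -/
theorem stmt_15 (p q M A B c₁ c₂ : ℝ) (hq1 : 1 < q) (hq2 : q < 2) (hp : 2 < p)
    (hM : 0 < M) (hA : A < 0)
    (hB1 : -((q * (p - 2) / (2 * (p - q))) *
        (p * (2 - q) / (2 * (p - q))) ^ ((2 - q) / (p - 2)) *
        M ^ ((p - q) / (p - 2)) / (-A) ^ ((2 - q) / (p - 2))) < B)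
    (hB2 : B < 0)
    (hc1 : 0 < c₁) (hc12 : c₁ < c₂)
    (hz1 : M * c₁ ^ (2 - q) + A * c₁ ^ (p - q) + B = 0)
    (hz2 : M * c₂ ^ (2 - q) + A * c₂ ^ (p - q) + B = 0) :
    (∀ c : ℝ, c = c₁ ∨ c = c₂ →
        c ^ (2 - q) * (M + (p - 1) * c ^ (p - 2) * A + (q - 1) * c ^ (q - 2) * B) =
          (2 - q) * c ^ (2 - q) * M + (p - q) * c ^ (p - q) * A) ∧
      0 < M + (p - 1) * c₁ ^ (p - 2) * A + (q - 1) * c₁ ^ (q - 2) * B ∧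
      M + (p - 1) * c₂ ^ (p - 2) * A + (q - 1) * c₂ ^ (q - 2) * B < 0 :=
  stmt_15_general p q M A B c₁ c₂ hq2 hp hA hc1 hc12 hz1 hz2
end
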